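/- Let α = (√5 - 1)/2 and let β be the unique real number in (0,1) with 1 - β - β² + β³ - β⁴ = 0. Let n ≥ 0 be a natural number and suppose α^(2^(-n)) < q < β^(2^(-n)). Then the greedy shooting sequence satisfies a_q(N) = t_N for all 0 ≤ N < 5·2^n, and a_q(5·2^n) ≠ t_{5·2^n}. -/

import Mathlib

/-!
The partial sums satisfy `S q (2N) = (1 - q) S (q²) N` and
`S q (2N + 1) = (1 - q) S (q²) N + t_N q^(2N)`. Hence if `t` is the greedy sequence for `q²` on
`[0, M)`, it is the greedy sequence for `q` on `[0, 2M)`, provided `q > 1/2` and the margin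
`|(1 - q) S q N| < q^N` is carried along. For `r = q^(2^n) ∈ (α, β)` the steps `N < 5` are
checked by hand (`r > α` is exactly what makes `S r 3 ≤ 0`). Finally `S q (5·2^n)` is a positive
multiple of `S r 5 = 1 - r - r² + r³ - r⁴`, which is positive because `r < β`; so the greedy
sequence picks `-1` at `5·2^n`, where `t = 1`.
-/

/-- The Thue-Morse sequence: `tm n = (-1)^(s₂ n)` where `s₂ n` is the sum of the
binary digits of `n`. -/
def tm (n : ℕ) : ℤ := (-1) ^ (Nat.digits 2 n).sum

/-- The partial sums `S q n = ∑_{0 ≤ j < n} tm j * q^j`. -/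
noncomputable def S (q : ℝ) (n : ℕ) : ℝ := ∑ j ∈ Finset.range n, (tm j : ℝ) * q ^ j

/-- The greedy shooting sequence: `a q N = 1` if `∑_{0 ≤ j < N} a q j * q^j ≤ 0`,
and `a q N = -1` otherwise. -/
noncomputable def a (q : ℝ) : ℕ → ℤ
  | N => if (∑ j : Fin N, (a q j : ℝ) * q ^ (j : ℕ)) ≤ 0 then 1 else -1
decreasing_by all_goals exact j.isLt

lemma tm_two_mul (n : ℕ) : tm (2 * n) = tm n := by
  rcases Nat.eq_zero_or_pos n with rfl | hn
  · rfl
  · rw [tm, Nat.digits_def' one_lt_two (by omega)]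
    simp [tm]

lemma tm_two_mul_add_one (n : ℕ) : tm (2 * n + 1) = -tm n := by
  rw [tm, Nat.digits_def' one_lt_two (by omega), Nat.mul_add_mod_self_left,
    Nat.mul_add_div two_pos]
  simp [tm, pow_add]

lemma tm_five_mul_two_pow (n : ℕ) : tm (5 * 2 ^ n) = 1 := by
  induction n with
  | zero => simp [tm]
  | succ n ih => rw [pow_succ', mul_left_comm, tm_two_mul, ih]

lemma S_succ (q : ℝ) (N : ℕ) : S q (N + 1) = S q N + tm N * q ^ N :=
  Finset.sum_range_succ _ _

lemma S_two_mul (q : ℝ) (N : ℕ) : S q (2 * N) = (1 - q) * S (q ^ 2) N := by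
  induction N with
  | zero => simp [S]
  | succ N ih =>
    rw [mul_add_one, S_succ, S_succ, ih, S_succ, tm_two_mul, tm_two_mul_add_one, pow_succ,
      pow_mul]
    push_cast
    ring

lemma S_two_mul_add_one (q : ℝ) (N : ℕ) :
    S q (2 * N + 1) = (1 - q) * S (q ^ 2) N + tm N * (q ^ 2) ^ N := by
  rw [S_succ, S_two_mul, tm_two_mul, pow_mul]

noncomputable def greedySign (s : ℝ) : ℤ := if s ≤ 0 then 1 else -1

lemma greedySign_eq_one_iff {s : ℝ} : greedySign s = 1 ↔ s ≤ 0 := by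
  unfold greedySign; split_ifs <;> simp_all

lemma greedySign_eq_neg_one_iff {s : ℝ} : greedySign s = -1 ↔ 0 < s := by
  unfold greedySign; split_ifs <;> simp_all

lemma greedySign_mul_of_pos {c : ℝ} (hc : 0 < c) (s : ℝ) :
    greedySign (c * s) = greedySign s := by
  rcases le_or_gt s 0 with hs | hs
  · rw [greedySign_eq_one_iff.2 hs,
      greedySign_eq_one_iff.2 (mul_nonpos_of_nonneg_of_nonpos hc.le hs)]
  · rw [greedySign_eq_neg_one_iff.2 hs, greedySign_eq_neg_one_iff.2 (mul_pos hc hs)]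

lemma a_eq_greedySign_of_forall_lt {q : ℝ} {M : ℕ} (h : ∀ N < M, tm N = greedySign (S q N)) :
    ∀ N ≤ M, a q N = greedySign (S q N) := by
  intro N
  induction N using Nat.strong_induction_on with
  | _ N ih =>
    intro hN
    have hsum : ∑ j : Fin N, (a q j : ℝ) * q ^ (j : ℕ) = S q N := by
      rw [Fin.sum_univ_eq_sum_range (fun j => (a q j : ℝ) * q ^ j)]
      refine Finset.sum_congr rfl fun j hj => ?_
      have hjN := Finset.mem_range.mp hj
      rw [ih j hjN (by omega), ← h j (by omega)]
    rw [a, hsum, greedySign]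

/-- The margin `|(1 - q) * S q N| < q ^ N` is the part of the invariant that survives the
substitution `q ↦ q ^ 2`. -/
def ThueMorseGreedyAt (q : ℝ) (N : ℕ) : Prop :=
  tm N = greedySign (S q N) ∧ |(1 - q) * S q N| < q ^ N

lemma ThueMorseGreedyAt.two_mul {q : ℝ} (hq0 : 0 ≤ q) (hq1 : q < 1) {N : ℕ}
    (h : ThueMorseGreedyAt (q ^ 2) N) : ThueMorseGreedyAt q (2 * N) := by
  obtain ⟨hsign, hbound⟩ := h
  refine ⟨by rw [tm_two_mul, S_two_mul, hsign, greedySign_mul_of_pos (sub_pos.2 hq1)], ?_⟩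
  have hfactor : (1 - q) ^ 2 ≤ 1 - q ^ 2 := by nlinarith
  calc |(1 - q) * S q (2 * N)| = (1 - q) ^ 2 * |S (q ^ 2) N| := by
        rw [S_two_mul, ← mul_assoc, abs_mul, ← sq, abs_of_nonneg (sq_nonneg _)]
    _ ≤ (1 - q ^ 2) * |S (q ^ 2) N| := by gcongr
    _ = |(1 - q ^ 2) * S (q ^ 2) N| := by
        rw [abs_mul, abs_of_nonneg (by nlinarith : 0 ≤ 1 - q ^ 2)]
    _ < q ^ (2 * N) := by rwa [pow_mul]

/-- With `s = S (q ^ 2) N ≤ 0` and `u = (q ^ 2) ^ N`, the odd partial sum `(1 - q) * s + u`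
is positive and keeps the margin. -/
lemma odd_step_estimate {q s u : ℝ} (hq : 1 / 2 < q) (hq1 : q < 1) (hs : s ≤ 0)
    (hsu : |(1 - q ^ 2) * s| < u) :
    0 < (1 - q) * s + u ∧ |(1 - q) * ((1 - q) * s + u)| < q * u := by
  rw [abs_lt] at *
  have hq' : 0 ≤ q * (1 - q) := by nlinarith
  have hfactor : (1 - q ^ 2) * s ≤ (1 - q) * s := by nlinarith [mul_nonneg hq' (neg_nonneg.2 hs)]
  have hfactor' : (1 - q ^ 2) * s ≤ (1 - q) ^ 2 * s := by
    nlinarith [mul_nonneg (mul_nonneg hq' (by linarith : (0:ℝ) ≤ 2)) (neg_nonneg.2 hs)]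
  refine ⟨by linarith, by nlinarith, by nlinarith⟩

lemma ThueMorseGreedyAt.two_mul_add_one {q : ℝ} (hq : 1 / 2 < q) (hq1 : q < 1) {N : ℕ}
    (h : ThueMorseGreedyAt (q ^ 2) N) : ThueMorseGreedyAt q (2 * N + 1) := by
  obtain ⟨hsign, hbound⟩ := h
  rw [ThueMorseGreedyAt, tm_two_mul_add_one, S_two_mul_add_one, pow_succ' q (2 * N), pow_mul]
  rcases le_or_gt (S (q ^ 2) N) 0 with hs | hs
  · rw [hsign, greedySign_eq_one_iff.2 hs]
    obtain ⟨hpos, hlt⟩ := odd_step_estimate hq hq1 hs hbound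
    push_cast
    rw [one_mul, greedySign_eq_neg_one_iff.2 hpos]
    exact ⟨rfl, hlt⟩
  · rw [hsign, greedySign_eq_neg_one_iff.2 hs]
    obtain ⟨hpos, hlt⟩ :=
      odd_step_estimate hq hq1 (neg_nonpos.2 hs.le) (by rwa [mul_neg, abs_neg])
    have hflip : (1 - q) * S (q ^ 2) N + ((-1 : ℤ) : ℝ) * (q ^ 2) ^ N
        = -((1 - q) * -S (q ^ 2) N + (q ^ 2) ^ N) := by push_cast; ring
    rw [hflip, greedySign_eq_one_iff.2 (by linarith), mul_neg, abs_neg]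
    exact ⟨rfl, hlt⟩

lemma thueMorseGreedyAt_of_lt_five {q : ℝ} (hq0 : 0 < q) (hq1 : q < 1) (hqq : 1 < q + q ^ 2)
    {N : ℕ} (hN : N < 5) : ThueMorseGreedyAt q N := by
  have h1q : 0 < 1 - q := by linarith
  have hq2 : 1 - q < q ^ 2 := by linarith
  have hq3 : 1 - q ^ 2 < q := by linarith
  have hq4 : (1 - q) ^ 2 < q ^ 4 := by nlinarith
  interval_cases N <;> refine ⟨?_, abs_lt.2 ⟨?_, ?_⟩⟩ <;>
    simp [S, Finset.sum_range_succ, tm, greedySign] <;>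
    nlinarith [mul_pos h1q hq0, mul_lt_mul_of_pos_left hq2 h1q, mul_pos (mul_pos h1q h1q) hq0,
      pow_pos hq0 3]

lemma pow_two_pow_succ (q : ℝ) (n : ℕ) : (q ^ 2) ^ 2 ^ n = q ^ 2 ^ (n + 1) := by
  rw [← pow_mul, pow_succ']

lemma thueMorseGreedyAt_of_lt_five_mul_two_pow (n : ℕ) {q : ℝ} (hq0 : 0 ≤ q) (hq1 : q < 1)
    (hqq : 1 < q ^ 2 ^ n + (q ^ 2 ^ n) ^ 2) {N : ℕ} (hN : N < 5 * 2 ^ n) :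
    ThueMorseGreedyAt q N := by
  induction n generalizing q N with
  | zero =>
    rw [pow_zero, pow_one] at hqq
    exact thueMorseGreedyAt_of_lt_five (by nlinarith) hq1 hqq (by simpa using hN)
  | succ n ih =>
    have hr1 : q ^ 2 ^ (n + 1) < 1 := pow_lt_one₀ hq0 hq1 (by positivity)
    have hq : 1 / 2 < q := by
      have hr : q ^ 2 ^ (n + 1) ≤ q := pow_le_of_le_one hq0 hq1.le (by positivity)
      nlinarith [pow_nonneg hq0 (2 ^ (n + 1))]
    have ih' := @ih (q ^ 2) (sq_nonneg q) (by nlinarith) (by rwa [pow_two_pow_succ])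
    obtain ⟨M, rfl | rfl⟩ := Nat.even_or_odd' N
    · exact (ih' (by rw [pow_succ] at hN; omega)).two_mul hq0 hq1
    · exact (ih' (by rw [pow_succ] at hN; omega)).two_mul_add_one hq hq1

lemma S_five (q : ℝ) : S q 5 = 1 - q - q ^ 2 + q ^ 3 - q ^ 4 := by
  have htm : tm 0 = 1 ∧ tm 1 = -1 ∧ tm 2 = -1 ∧ tm 3 = 1 ∧ tm 4 = -1 := by simp [tm]
  simp only [S, Finset.sum_range_succ, Finset.sum_range_zero, htm]
  push_cast
  ring

lemma S_five_pos {β r : ℝ} (hr0 : 0 ≤ r) (hrβ : r < β) (hβ1 : β < 1)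
    (hβ : 1 - β - β ^ 2 + β ^ 3 - β ^ 4 = 0) : 0 < S r 5 := by
  -- `S r 5 = (β - r) * (this factor)`, since `1 - β - β ^ 2 + β ^ 3 - β ^ 4 = 0`
  have hfactor :
      0 < 1 + β + r - β ^ 2 - β * r - r ^ 2 + β ^ 3 + β ^ 2 * r + β * r ^ 2 + r ^ 3 := by
    nlinarith [mul_nonneg hr0 (sub_nonneg.2 hβ1.le), mul_nonneg hr0 hr0, pow_nonneg hr0 3,
      mul_nonneg (mul_nonneg hr0 hr0) (sub_nonneg.2 hβ1.le)]
  rw [S_five]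
  nlinarith [mul_pos (sub_pos.2 hrβ) hfactor]

lemma S_five_mul_two_pow_pos (n : ℕ) {q : ℝ} (hq0 : 0 ≤ q) (hq1 : q < 1)
    (h : 0 < S (q ^ 2 ^ n) 5) : 0 < S q (5 * 2 ^ n) := by
  induction n generalizing q with
  | zero => simpa using h
  | succ n ih =>
    rw [pow_succ', mul_left_comm, S_two_mul]
    exact mul_pos (sub_pos.2 hq1) (ih (sq_nonneg q) (by nlinarith) (by rwa [pow_two_pow_succ]))

lemma one_lt_add_sq_of_golden_lt {r : ℝ} (hr : (Real.sqrt 5 - 1) / 2 < r) : 1 < r + r ^ 2 := by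
  have h5 : Real.sqrt 5 ^ 2 = 5 := Real.sq_sqrt (by norm_num)
  have h5pos : 1 < Real.sqrt 5 := by nlinarith [Real.sqrt_nonneg 5]
  nlinarith [mul_pos (sub_pos.2 hr) (by linarith : 0 < r + (Real.sqrt 5 + 1) / 2)]

lemma two_zpow_neg_natCast (n : ℕ) : (2 : ℝ) ^ (-(n : ℤ)) = ((2 ^ n : ℕ) : ℝ)⁻¹ := by
  rw [zpow_neg, zpow_natCast, Nat.cast_pow, Nat.cast_ofNat]

theorem main_greedy_five (β : ℝ) (hβ0 : 0 < β) (hβ1 : β < 1)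
    (hβ : 1 - β - β ^ 2 + β ^ 3 - β ^ 4 = 0)
    (n : ℕ) (q : ℝ)
    (hq0 : ((Real.sqrt 5 - 1) / 2) ^ ((2 : ℝ) ^ (-(n : ℤ))) < q)
    (hq1 : q < β ^ ((2 : ℝ) ^ (-(n : ℤ)))) :
    (∀ N < 5 * 2 ^ n, a q N = tm N) ∧ a q (5 * 2 ^ n) ≠ tm (5 * 2 ^ n) := by
  have hα0 : 0 < (Real.sqrt 5 - 1) / 2 := by
    have : 1 < Real.sqrt 5 := by rw [Real.lt_sqrt zero_le_one]; norm_num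
    linarith
  have hq : 0 < q := (Real.rpow_pos_of_pos hα0 _).trans hq0
  rw [two_zpow_neg_natCast] at hq0 hq1
  have hα : (Real.sqrt 5 - 1) / 2 < q ^ 2 ^ n := by
    exact_mod_cast (Real.rpow_inv_lt_iff_of_pos hα0.le hq.le (by positivity)).1 hq0
  have hβq : q ^ 2 ^ n < β := by
    exact_mod_cast (Real.lt_rpow_inv_iff_of_pos hq.le hβ0.le (by positivity)).1 hq1
  have hq1' : q < 1 := (pow_lt_one_iff_of_nonneg hq.le (by positivity)).1 (hβq.trans hβ1)
  have hgreedy : ∀ N < 5 * 2 ^ n, tm N = greedySign (S q N) := fun N hN =>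
    (thueMorseGreedyAt_of_lt_five_mul_two_pow n hq.le hq1' (one_lt_add_sq_of_golden_lt hα) hN).1
  have hpos : 0 < S q (5 * 2 ^ n) :=
    S_five_mul_two_pow_pos n hq.le hq1' (S_five_pos (by positivity) hβq hβ1 hβ)
  have ha := a_eq_greedySign_of_forall_lt hgreedy
  refine ⟨fun N hN => (ha N hN.le).trans (hgreedy N hN).symm, ?_⟩
  rw [ha _ le_rfl, greedySign_eq_neg_one_iff.2 hpos, tm_five_mul_two_pow]
  decide
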